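/- Let n ≥ 2, k ≥ 1, and let c : Fin n → ((Fin n → Fin k) → ℝ) be the payoff functions of an n-player finite game in which every player has strategy set Fin k. Write ⊤ for the last strategy k−1 : Fin k and let ℓ = n−1 : Fin n be the last player. The game is potential if and only if both of the following hold: (a) for every player i ≠ ℓ, every profile s : Fin n → Fin k, and all x, y : Fin k, writing d t = c ℓ t − c i t, one has d (update (update s i x) ℓ y) − d (update (update s i x) ℓ ⊤) − d (update (update s i ⊤) ℓ y) + d (update (update s i ⊤) ℓ ⊤) = 0; and (b) for all players i < j with j ≠ ℓ, every profile s with s ℓ = ⊤, and all x, y : Fin k, writing e t = c j t − c i t, one has e (update (update s i x) j y) − e (update (update s i x) j ⊤) − e (update (update s i ⊤) j y) + e (update (update s i ⊤) j ⊤) = 0. -/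
import Mathlib


/-- An `n`-player finite game with payoff functions `c` (each player has strategy
set `Fin k`) is potential if it admits a potential function `p`. -/
def IsPotentialGame {n k : ℕ} (c : Fin n → (Fin n → Fin k) → ℝ) : Prop :=
  ∃ p : (Fin n → Fin k) → ℝ,
    ∀ (i : Fin n) (s : Fin n → Fin k) (x y : Fin k),
      c i (Function.update s i x) - c i (Function.update s i y) =
        p (Function.update s i x) - p (Function.update s i y)

/-- The four-cycle expression
`d(s[i:=x][j:=y]) - d(s[i:=x][j:=⊤]) - d(s[i:=⊤][j:=y]) + d(s[i:=⊤][j:=⊤])`. -/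
def cycleSum {n k : ℕ} (d : (Fin n → Fin k) → ℝ) (i j : Fin n) (top : Fin k)
    (s : Fin n → Fin k) (x y : Fin k) : ℝ :=
  d (Function.update (Function.update s i x) j y)
    - d (Function.update (Function.update s i x) j top)
    - d (Function.update (Function.update s i top) j y)
    + d (Function.update (Function.update s i top) j top)

namespace Stmt12Aux

variable {n k : ℕ}

def T (top : Fin k) (m : ℕ) (s : Fin n → Fin k) : Fin n → Fin k :=
  fun j => if (j : ℕ) < m then s j else top

theorem T_apply_of_le (top : Fin k) {m : ℕ} {j : Fin n} (h : m ≤ (j : ℕ))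
    (s : Fin n → Fin k) : T top m s j = top := if_neg (by omega)

theorem T_n (top : Fin k) (s : Fin n → Fin k) : T top n s = s := by
  funext j; simp [T, j.isLt]

theorem T_update_of_le (top : Fin k) {m : ℕ} {i : Fin n} (h : m ≤ (i : ℕ))
    (s : Fin n → Fin k) (z : Fin k) :
    T top m (Function.update s i z) = T top m s := by
  funext j
  by_cases hj : (j : ℕ) < m
  · have hji : j ≠ i := fun e => by subst e; omega
    simp [T, hj, Function.update_of_ne hji]
  · simp [T, hj]

theorem T_update_of_lt (top : Fin k) {m : ℕ} {i : Fin n} (h : (i : ℕ) < m)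
    (s : Fin n → Fin k) (z : Fin k) :
    T top m (Function.update s i z) = Function.update (T top m s) i z := by
  funext j
  by_cases hji : j = i
  · subst hji; simp [T, h]
  · by_cases hj : (j : ℕ) < m <;> simp [T, hj, Function.update_of_ne hji]

theorem T_succ (top : Fin k) {m : ℕ} (hm : m < n) (s : Fin n → Fin k) :
    T top (m + 1) s = Function.update (T top m s) ⟨m, hm⟩ (s ⟨m, hm⟩) := by
  funext j
  by_cases hji : j = ⟨m, hm⟩
  · subst hji; simp [T]
  · have hne : (j : ℕ) ≠ m := fun e => hji (Fin.ext e)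
    by_cases hj : (j : ℕ) < m
    · simp [T, hj, Nat.lt_succ_of_lt hj, Function.update_of_ne hji]
    · have h2 : ¬ (j : ℕ) < m + 1 := by omega
      simp [T, hj, h2, Function.update_of_ne hji]

end Stmt12Aux

theorem stmt12 (n k : ℕ) (hn : 2 ≤ n) (hk : 1 ≤ k)
    (c : Fin n → (Fin n → Fin k) → ℝ)
    (top : Fin k) (htop : (top : ℕ) = k - 1)
    (lst : Fin n) (hlst : (lst : ℕ) = n - 1) :
    IsPotentialGame c ↔
      ((∀ i : Fin n, i ≠ lst → ∀ (s : Fin n → Fin k) (x y : Fin k),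
          cycleSum (fun t => c lst t - c i t) i lst top s x y = 0) ∧
        (∀ i j : Fin n, i < j → j ≠ lst →
          ∀ s : Fin n → Fin k, s lst = top → ∀ x y : Fin k,
            cycleSum (fun t => c j t - c i t) i j top s x y = 0)) := by
  classical
  constructor
  · rintro ⟨p, hp⟩
    have key : ∀ i j : Fin n, i ≠ j → ∀ (s : Fin n → Fin k) (x y : Fin k),
        cycleSum (fun t => c j t - c i t) i j top s x y = 0 := by
      intro i j hij s x y
      have hji : j ≠ i := hij.symm
      have h1 := hp j (Function.update s i x) y top
      have h2 := hp j (Function.update s i top) y top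
      have h3 := hp i (Function.update s j y) x top
      have h4 := hp i (Function.update s j top) x top
      rw [Function.update_comm hji y x s, Function.update_comm hji y top s] at h3
      rw [Function.update_comm hji top x s, Function.update_comm hji top top s] at h4
      simp only [cycleSum]
      linarith
    exact ⟨fun i hi s x y => key i lst hi s x y,
      fun i j hij _ s _ x y => key i j (ne_of_lt hij) s x y⟩
  · rintro ⟨ha, hb⟩
    set f : ℕ → (Fin n → Fin k) → ℝ := fun m s =>
      if h : m < n then c ⟨m, h⟩ (Stmt12Aux.T top (m + 1) s)
        - c ⟨m, h⟩ (Stmt12Aux.T top m s) else 0 with hf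
    refine ⟨fun s => ∑ m ∈ Finset.range n, f m s, ?_⟩
    intro i s x y
    simp only []
    suffices h : ∀ z : Fin k,
        c i (Function.update s i z) - c i (Function.update s i top) =
          (∑ m ∈ Finset.range n, f m (Function.update s i z)) -
            (∑ m ∈ Finset.range n, f m (Function.update s i top)) by
      have hx := h x; have hy := h y; linarith
    intro z
    have key : ∀ r, (i : ℕ) + 1 ≤ r → r ≤ n →
        (∑ m ∈ Finset.range r, f m (Function.update s i z)) -
          (∑ m ∈ Finset.range r, f m (Function.update s i top)) =
          c i (Function.update (Stmt12Aux.T top r s) i z) -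
            c i (Function.update (Stmt12Aux.T top r s) i top) := by
      intro r hr
      induction r, hr using Nat.le_induction with
      | base =>
        intro _
        rw [Finset.sum_range_succ, Finset.sum_range_succ]
        have hzero : ∀ m ∈ Finset.range (i : ℕ),
            f m (Function.update s i z) = f m (Function.update s i top) := by
          intro m hm
          rw [Finset.mem_range] at hm
          have hmn : m < n := lt_trans hm i.isLt
          simp only [hf]
          rw [dif_pos hmn, dif_pos hmn,
            Stmt12Aux.T_update_of_le top hm.le s z,
            Stmt12Aux.T_update_of_le top hm.le s top,
            Stmt12Aux.T_update_of_le top (Nat.succ_le_of_lt hm) s z,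
            Stmt12Aux.T_update_of_le top (Nat.succ_le_of_lt hm) s top]
        rw [Finset.sum_congr rfl hzero]
        have hfi : ∀ w : Fin k, f (i : ℕ) (Function.update s i w) =
            c i (Function.update (Stmt12Aux.T top ((i : ℕ) + 1) s) i w)
              - c i (Stmt12Aux.T top (i : ℕ) s) := by
          intro w
          simp only [hf]
          rw [dif_pos i.isLt]
          simp only [Fin.eta]
          rw [Stmt12Aux.T_update_of_lt top (Nat.lt_succ_self _) s w,
            Stmt12Aux.T_update_of_le top le_rfl s w]
        rw [hfi z, hfi top]
        ring
      | succ r hr ih =>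
        intro hrn
        have hrn' : r < n := hrn
        have ihr := ih (le_of_lt hrn')
        set j : Fin n := ⟨r, hrn'⟩ with hj
        have hij : i < j := by
          simp only [hj, Fin.lt_def, Fin.val_mk]; omega
        have hijne : i ≠ j := ne_of_lt hij
        have hjine : j ≠ i := (ne_of_lt hij).symm
        set v : Fin n → Fin k := Stmt12Aux.T top r s with hv
        have hvj : v j = top := Stmt12Aux.T_apply_of_le top (le_refl r) s
        have hEtop : ∀ w : Fin k,
            Function.update (Function.update v i w) j top = Function.update v i w := by
          intro w
          rw [Function.update_eq_self_iff, Function.update_of_ne hjine, hvj]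
        have hfr : ∀ w : Fin k, f r (Function.update s i w) =
            c j (Function.update (Function.update v i w) j (s j))
              - c j (Function.update v i w) := by
          intro w
          simp only [hf]
          rw [dif_pos hrn']
          rw [Stmt12Aux.T_update_of_lt top (by omega : (i : ℕ) < r + 1) s w,
            Stmt12Aux.T_update_of_lt top (by omega : (i : ℕ) < r) s w,
            Stmt12Aux.T_succ top hrn' s, ← hj, ← hv,
            Function.update_comm hjine (s j) w v]
        have hcyc : cycleSum (fun t => c j t - c i t) i j top v z (s j) = 0 := by
          by_cases hjl : j = lst
          · have hil : i ≠ lst := by rw [← hjl]; exact hijne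
            have := ha i hil v z (s j)
            rw [← hjl] at this
            exact this
          · have hvlst : v lst = top := by
              refine Stmt12Aux.T_apply_of_le top ?_ s
              omega
            exact hb i j hij hjl v hvlst z (s j)
        simp only [cycleSum] at hcyc
        rw [hEtop z, hEtop top] at hcyc
        rw [Finset.sum_range_succ, Finset.sum_range_succ, hfr z, hfr top,
          Stmt12Aux.T_succ top hrn' s, ← hj, ← hv,
          Function.update_comm hjine (s j) z v,
          Function.update_comm hjine (s j) top v]
        linarith
    have h1 := key n i.isLt le_rfl
    rw [Stmt12Aux.T_n top s] at h1
    exact h1.symm
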